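/- Let m, n, r, d be integers with m, n ≥ 2, d ≥ 1 and 0 < r < min{m,n}, let a be an integer with 0 ≤ a ≤ rd, and define α := ⌊a/(n−r)⌋, s := a mod (n−r), β := ⌊(rd−a)/(m−r)⌋, t := (rd−a) mod (m−r). Suppose P = L R, where L ∈ ℂ[λ]^{m×r} has columns forming a minimal basis, R ∈ ℂ[λ]^{r×n} has rows forming a minimal basis, N_ℓ(L) has minimal indices β+1 (t times) and β (m−r−t times), N_r(R) has minimal indices α+1 (s times) and α (n−r−s times), and deg(L_{*i}) + deg(R_{i*}) = d for i = 1,…,r. Then Σ_{i=1}^r deg(R_{i*}) = a; that is, orb(K_a) ⊆ A^{m×n}_{d,r,a}, where A^{m×n}_{d,r,a} := { L R : L ∈ ℂ[λ]^{m×r}, R ∈ ℂ[λ]^{r×n}, deg(L_{*i}) + deg(R_{i*}) = d for i = 1,…,r, Σ_{i=1}^r deg(R_{i*}) = a }. -/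

import Mathlib

open Polynomial Matrix

noncomputable section

variable {F : Type*} [Field F]

/-- The matrix over the field of rational functions associated with a polynomial matrix. -/
def toRat {m n : ℕ} (P : Matrix (Fin m) (Fin n) F[X]) : Matrix (Fin m) (Fin n) (RatFunc F) :=
  P.map (algebraMap F[X] (RatFunc F))

/-- The normal rank of a polynomial matrix: its rank over the field of rational functions. -/
def normalRank {m n : ℕ} (P : Matrix (Fin m) (Fin n) F[X]) : ℕ := (toRat P).rank

/-- The degree of a polynomial matrix: the maximum of the degrees of its entries,
`⊥` (i.e. -∞) for the zero matrix. -/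
def matDeg {m n : ℕ} (P : Matrix (Fin m) (Fin n) F[X]) : WithBot ℕ :=
  Finset.univ.sup fun i : Fin m => Finset.univ.sup fun j : Fin n => (P i j).degree

/-- Degree of the i-th row. -/
def rowDeg {m n : ℕ} (P : Matrix (Fin m) (Fin n) F[X]) (i : Fin m) : WithBot ℕ :=
  Finset.univ.sup fun j : Fin n => (P i j).degree

/-- Degree of the j-th column. -/
def colDeg {m n : ℕ} (P : Matrix (Fin m) (Fin n) F[X]) (j : Fin n) : WithBot ℕ :=
  Finset.univ.sup fun i : Fin m => (P i j).degree

/-- Degree of the i-th row as a natural number (0 for a zero row). -/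
def rowDegNat {m n : ℕ} (P : Matrix (Fin m) (Fin n) F[X]) (i : Fin m) : ℕ :=
  Finset.univ.sup fun j : Fin n => (P i j).natDegree

/-- Degree of the j-th column as a natural number (0 for a zero column). -/
def colDegNat {m n : ℕ} (P : Matrix (Fin m) (Fin n) F[X]) (j : Fin n) : ℕ :=
  Finset.univ.sup fun i : Fin m => (P i j).natDegree

/-- Highest-row-degree coefficient matrix. -/
def hrMatrix {m n : ℕ} (P : Matrix (Fin m) (Fin n) F[X]) : Matrix (Fin m) (Fin n) F :=
  Matrix.of fun i j => (P i j).coeff (rowDegNat P i)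

/-- Highest-column-degree coefficient matrix. -/
def hcMatrix {m n : ℕ} (P : Matrix (Fin m) (Fin n) F[X]) : Matrix (Fin m) (Fin n) F :=
  Matrix.of fun i j => (P i j).coeff (colDegNat P j)

/-- A polynomial matrix is row reduced if its highest-row-degree coefficient matrix has
full row rank. -/
def RowReduced {m n : ℕ} (P : Matrix (Fin m) (Fin n) F[X]) : Prop := (hrMatrix P).rank = m

/-- A polynomial matrix is column reduced if its highest-column-degree coefficient matrix has
full column rank. -/
def ColReduced {m n : ℕ} (P : Matrix (Fin m) (Fin n) F[X]) : Prop := (hcMatrix P).rank = n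

/-- Evaluation of a polynomial matrix at a point of the algebraic closure. -/
def evalMat {m n : ℕ} (P : Matrix (Fin m) (Fin n) F[X]) (x : AlgebraicClosure F) :
    Matrix (Fin m) (Fin n) (AlgebraicClosure F) :=
  Matrix.of fun i j => aeval x (P i j)

/-- The rows of `P` form a minimal basis of the rational subspace they span (Forney's
characterization): full row rank at every point of the algebraic closure, and row reduced. -/
def IsMinimalRowBasis {m n : ℕ} (P : Matrix (Fin m) (Fin n) F[X]) : Prop :=
  (∀ x : AlgebraicClosure F, (evalMat P x).rank = m) ∧ RowReduced P

/-- The columns of `P` form a minimal basis of the rational subspace they span. -/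
def IsMinimalColBasis {m n : ℕ} (P : Matrix (Fin m) (Fin n) F[X]) : Prop :=
  (∀ x : AlgebraicClosure F, (evalMat P x).rank = n) ∧ ColReduced P

/-- The column space Col(P) over the field of rational functions. -/
def colSpace {m n : ℕ} (P : Matrix (Fin m) (Fin n) F[X]) :
    Submodule (RatFunc F) (Fin m → RatFunc F) :=
  LinearMap.range (toRat P).mulVecLin

/-- The row space Row(P) over the field of rational functions. -/
def rowSpace {m n : ℕ} (P : Matrix (Fin m) (Fin n) F[X]) :
    Submodule (RatFunc F) (Fin n → RatFunc F) :=
  LinearMap.range (toRat P)ᵀ.mulVecLin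

/-- The right nullspace N_r(P). -/
def rightNull {m n : ℕ} (P : Matrix (Fin m) (Fin n) F[X]) :
    Submodule (RatFunc F) (Fin n → RatFunc F) :=
  LinearMap.ker (toRat P).mulVecLin

/-- The left nullspace N_ℓ(P). -/
def leftNull {m n : ℕ} (P : Matrix (Fin m) (Fin n) F[X]) :
    Submodule (RatFunc F) (Fin m → RatFunc F) :=
  LinearMap.ker (toRat P)ᵀ.mulVecLin
/-- Minimal row basis over ℂ (Forney's characterization, with evaluation points in ℂ,
which is algebraically closed). -/
def IsMinimalRowBasisC {p n : ℕ} (M : Matrix (Fin p) (Fin n) ℂ[X]) : Prop :=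
  (∀ x : ℂ, (M.map (fun q => q.eval x)).rank = p) ∧ RowReduced M

/-- Minimal column basis over ℂ. -/
def IsMinimalColBasisC {m p : ℕ} (M : Matrix (Fin m) (Fin p) ℂ[X]) : Prop :=
  (∀ x : ℂ, (M.map (fun q => q.eval x)).rank = p) ∧ ColReduced M

/-- A rational subspace V has the multiset ms as its minimal indices: it admits a minimal
basis (arranged as the rows of a polynomial matrix) whose multiset of row degrees is ms. -/
def HasMinIndices {n : ℕ} (V : Submodule (RatFunc ℂ) (Fin n → RatFunc ℂ))
    (ms : Multiset ℕ) : Prop :=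
  ∃ (p : ℕ) (M : Matrix (Fin p) (Fin n) ℂ[X]), IsMinimalRowBasisC M ∧ rowSpace M = V ∧
    (Finset.univ.val.map fun i : Fin p => rowDegNat M i) = ms

/-!
The right null space of `R` has a minimal basis `M` with `n - r` rows whose row degrees sum
to `a`, so it suffices that dual minimal bases have equal degree sums. For a column split
`e : Fin r ⊕ Fin (n - r) ≃ Fin n`, let `ρ e` and `μ e` be the complementary maximal minors of
`R` and `M`. Completing `R` to an invertible square matrix and multiplying it by a block
matrix built from `Mᵀ` shows `δ * μ e ~ γ * ρ e` with `δ ≠ 0`, `γ` independent of `e`. Since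
the minors of a minimal basis have no common zero, they generate the unit ideal, so
`δ ∣ γ` and `γ ∣ δ`; hence `μ e ~ ρ e` for all `e`. Row reducedness makes the largest degree
of a maximal minor equal to the sum of the row degrees, and the two sums agree.
-/

theorem Function.Injective.exists_sumEquiv_apply_inl {α β γ : Type*} [Fintype α] [Fintype β]
    [Fintype γ] {g : α → γ} (hg : Function.Injective g)
    (hcard : Fintype.card α + Fintype.card β = Fintype.card γ) :
    ∃ e : α ⊕ β ≃ γ, ∀ i, e (Sum.inl i) = g i := by
  classical
  have hβ : Fintype.card β = Fintype.card ((Set.range g)ᶜ : Set γ) := by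
    rw [Fintype.card_compl_set, Set.card_range_of_injective hg]; omega
  exact ⟨(Equiv.sumCongr (Equiv.ofInjective g hg) (Fintype.equivOfCardEq hβ)).trans
    (Equiv.Set.sumCompl _), fun i => rfl⟩

theorem Matrix.exists_det_submatrix_ne_zero_of_rank_eq {K ι : Type*} [Field K] [Fintype ι]
    {r : ℕ} (A : Matrix (Fin r) ι K) (h : A.rank = r) :
    ∃ g : Fin r → ι, Function.Injective g ∧ (A.submatrix id g).det ≠ 0 := by
  obtain ⟨κ, a, ha, hspan, hli⟩ := exists_linearIndependent' K A.col
  have : Finite κ := Finite.of_injective a ha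
  have : Fintype κ := Fintype.ofFinite κ
  have hκ : Fintype.card κ = r := by
    rw [linearIndependent_iff_card_eq_finrank_span.1 hli, Set.finrank, hspan,
      ← rank_eq_finrank_span_cols, h]
  let e : Fin r ≃ κ := (Fintype.equivFinOfCardEq hκ).symm
  refine ⟨a ∘ e, ha.comp e.injective, ?_⟩
  have hcols : LinearIndependent K (A.submatrix id (a ∘ e)).col := hli.comp e e.injective
  exact (isUnit_iff_ne_zero.1 ((linearIndependent_cols_iff_isUnit.1 hcols).map detMonoidHom))

theorem Matrix.associated_det_submatrix_id_equiv {S ι κ : Type*} [CommRing S] [Fintype κ]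
    [DecidableEq κ] (A : Matrix κ ι S) (e e' : κ ≃ ι) :
    Associated (A.submatrix id e).det (A.submatrix id e').det := by
  have : A.submatrix id e = (A.submatrix id e').submatrix id (e.trans e'.symm) := by
    ext i j; simp
  rw [this, det_permute']
  rcases Int.units_eq_one_or (Equiv.Perm.sign (e.trans e'.symm)) with h | h <;> simp [h]

theorem Matrix.det_submatrix_fromRows_mul_det {S α β ι : Type*} [CommRing S] [Fintype α]
    [DecidableEq α] [Fintype β] [DecidableEq β] [Fintype ι]
    (R : Matrix α ι S) (E : Matrix β ι S) (N : Matrix ι β S) (hRN : R * N = 0)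
    (e : α ⊕ β ≃ ι) :
    ((fromRows R E).submatrix id e).det * (N.submatrix (e ∘ Sum.inr) id).det =
      (R.submatrix id (e ∘ Sum.inl)).det * (E * N).det := by
  have hN : fromRows (N.submatrix (e ∘ Sum.inl) id) (N.submatrix (e ∘ Sum.inr) id) =
      N.submatrix e id := by
    ext (j | j) k <;> rfl
  -- the upper right block of the product is `R * N = 0`
  have key : (fromRows R E).submatrix id e *
      fromBlocks 1 (N.submatrix (e ∘ Sum.inl) id) 0 (N.submatrix (e ∘ Sum.inr) id) =
      fromBlocks (R.submatrix id (e ∘ Sum.inl)) 0 (E.submatrix id (e ∘ Sum.inl)) (E * N) := by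
    rw [← fromCols_fromRows_eq_fromBlocks, hN, mul_fromCols, submatrix_mul_equiv _ _ id e id,
      ← fromCols_fromRows_eq_fromBlocks]
    congr 1
    · ext (i | i) j <;> simp [mul_apply, Fintype.sum_sum_type, one_apply]
    · rw [submatrix_id_id, fromRows_mul, hRN]
  have := congrArg det key
  rwa [det_mul, det_fromBlocks_zero₂₁, det_fromBlocks_zero₁₂, det_one, one_mul] at this

theorem Polynomial.dvd_of_forall_dvd_mul_of_forall_exists_eval_ne_zero {K ι : Type*} [Field K]
    [IsAlgClosed K] [Fintype ι] {f : ι → K[X]} (hf : ∀ x : K, ∃ i, (f i).eval x ≠ 0)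
    {a b : K[X]} (h : ∀ i, a ∣ b * f i) : a ∣ b := by
  have htop : Ideal.span (Set.range f) = ⊤ := by
    obtain ⟨g, hg⟩ := (IsPrincipalIdealRing.principal (Ideal.span (Set.range f))).principal
    rw [hg, Ideal.span_singleton_eq_top]
    by_contra hg_unit
    obtain ⟨x, hx⟩ := IsAlgClosed.exists_root g (mt isUnit_iff_degree_eq_zero.2 hg_unit)
    obtain ⟨i, hi⟩ := hf x
    have hgf : f i ∈ Ideal.span (Set.range f) := Ideal.subset_span ⟨i, rfl⟩
    rw [hg, Ideal.submodule_span_eq, Ideal.mem_span_singleton] at hgf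
    exact hi (eval_eq_zero_of_dvd_of_eval_eq_zero hgf hx)
  obtain ⟨c, hc⟩ := Ideal.mem_span_range_iff_exists_fun.1 (htop ▸ Submodule.mem_top (x := 1))
  rw [← mul_one b, ← hc, Finset.mul_sum]
  exact Finset.dvd_sum fun i _ => (h i).mul_left (c i) |>.trans (by rw [mul_left_comm])

theorem Polynomial.associated_of_forall_associated_mul {K ι : Type*} [Field K] [IsAlgClosed K]
    [Fintype ι] {ρ μ : ι → K[X]} (hρ : ∀ x : K, ∃ i, (ρ i).eval x ≠ 0)
    (hμ : ∀ x : K, ∃ i, (μ i).eval x ≠ 0) {δ γ : K[X]} (hδ : δ ≠ 0)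
    (h : ∀ i, Associated (δ * μ i) (γ * ρ i)) (i : ι) : Associated (μ i) (ρ i) := by
  have hδγ : Associated δ γ := associated_of_dvd_dvd
    (dvd_of_forall_dvd_mul_of_forall_exists_eval_ne_zero hρ fun i =>
      (dvd_mul_right δ (μ i)).trans (h i).dvd)
    (dvd_of_forall_dvd_mul_of_forall_exists_eval_ne_zero hμ fun i =>
      (dvd_mul_right γ (ρ i)).trans (h i).symm.dvd)
  exact ((h i).trans (hδγ.symm.mul_right _)).of_mul_left (Associated.refl δ) hδ

theorem Polynomial.coeff_prod_sum_of_natDegree_le {R ι : Type*} [CommSemiring R] (s : Finset ι)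
    (f : ι → R[X]) (d : ι → ℕ) (h : ∀ i ∈ s, (f i).natDegree ≤ d i) :
    (∏ i ∈ s, f i).coeff (∑ i ∈ s, d i) = ∏ i ∈ s, (f i).coeff (d i) := by
  classical
  induction s using Finset.cons_induction with
  | empty => simp
  | cons a s _ ih =>
    rw [Finset.forall_mem_cons] at h
    rw [Finset.prod_cons, Finset.sum_cons, Finset.prod_cons,
      coeff_mul_add_eq_of_natDegree_le h.1
        ((natDegree_prod_le s f).trans (Finset.sum_le_sum h.2)), ih h.2]

theorem Multiset.card_replicate_mod_add_replicate_div {k : ℕ} (hk : 0 < k) (a : ℕ) :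
    card (replicate (a % k) (a / k + 1) + replicate (k - a % k) (a / k)) = k := by
  have := Nat.mod_lt a hk
  simp only [card_add, card_replicate]
  omega

theorem Multiset.sum_replicate_mod_add_replicate_div {k : ℕ} (hk : 0 < k) (a : ℕ) :
    (replicate (a % k) (a / k + 1) + replicate (k - a % k) (a / k)).sum = a := by
  have hmod := (Nat.mod_lt a hk).le
  have hdiv := Nat.div_add_mod a k
  simp only [sum_add, sum_replicate, smul_eq_mul]
  zify [hmod] at hdiv ⊢
  linear_combination hdiv

theorem natDegree_le_rowDegNat {m n : ℕ} (A : Matrix (Fin m) (Fin n) F[X]) (i : Fin m)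
    (j : Fin n) : (A i j).natDegree ≤ rowDegNat A i :=
  Finset.le_sup (f := fun j => (A i j).natDegree) (Finset.mem_univ j)

theorem degree_le_rowDeg {m n : ℕ} (A : Matrix (Fin m) (Fin n) F[X]) (i : Fin m) (j : Fin n) :
    (A i j).degree ≤ rowDeg A i :=
  Finset.le_sup (f := fun j => (A i j).degree) (Finset.mem_univ j)

theorem rowDeg_eq_rowDegNat {m n : ℕ} (A : Matrix (Fin m) (Fin n) F[X]) {i : Fin m}
    (h : ∃ j, A i j ≠ 0) : rowDeg A i = rowDegNat A i := by
  obtain ⟨j₁, hj₁⟩ := h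
  refine le_antisymm (Finset.sup_le fun j _ => degree_le_natDegree.trans
    (WithBot.coe_le_coe.2 (natDegree_le_rowDegNat A i j))) ?_
  obtain ⟨j₀, -, hj₀⟩ := Finset.exists_mem_eq_sup Finset.univ ⟨j₁, Finset.mem_univ _⟩
    fun j => (A i j).natDegree
  by_cases hz : A i j₀ = 0
  · have : rowDegNat A i = 0 := by rw [rowDegNat, hj₀, hz, natDegree_zero]
    rw [this]
    exact (zero_le_degree_iff.2 hj₁).trans (degree_le_rowDeg A i j₁)
  · rw [rowDegNat, hj₀, ← degree_eq_natDegree hz]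
    exact degree_le_rowDeg A i j₀

theorem RowReduced.exists_ne_zero {m n : ℕ} {A : Matrix (Fin m) (Fin n) F[X]} (hA : RowReduced A)
    (i : Fin m) : ∃ j, A i j ≠ 0 := by
  obtain ⟨g, -, hg⟩ := (hrMatrix A).exists_det_submatrix_ne_zero_of_rank_eq hA
  by_contra! h
  exact hg (det_eq_zero_of_row_eq_zero i fun j => by simp [hrMatrix, h])

theorem natDegree_det_submatrix_le_sum_rowDegNat {r n : ℕ} (A : Matrix (Fin r) (Fin n) F[X])
    (g : Fin r → Fin n) : (A.submatrix id g).det.natDegree ≤ ∑ i, rowDegNat A i := by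
  rw [det_apply]
  refine natDegree_sum_le_of_forall_le _ _ fun σ _ => (natDegree_smul_le _ _).trans ?_
  refine (natDegree_prod_le _ _).trans ?_
  rw [← Equiv.sum_comp σ (rowDegNat A)]
  exact Finset.sum_le_sum fun i _ => natDegree_le_rowDegNat A (σ i) (g i)

theorem coeff_det_submatrix_sum_rowDegNat {r n : ℕ} (A : Matrix (Fin r) (Fin n) F[X])
    (g : Fin r → Fin n) :
    (A.submatrix id g).det.coeff (∑ i, rowDegNat A i) = ((hrMatrix A).submatrix id g).det := by
  rw [det_apply, det_apply, finsetSum_coeff]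
  refine Finset.sum_congr rfl fun σ _ => ?_
  rw [coeff_smul, ← Equiv.sum_comp σ (rowDegNat A), coeff_prod_sum_of_natDegree_le _
    (fun i => A.submatrix id g (σ i) i) _ fun i _ => natDegree_le_rowDegNat A (σ i) (g i)]
  rfl

theorem RowReduced.exists_sumEquiv_natDegree_det_submatrix_eq {r p n : ℕ} (hn : r + p = n)
    {R : Matrix (Fin r) (Fin n) F[X]} (hR : RowReduced R) :
    ∃ e : Fin r ⊕ Fin p ≃ Fin n,
      (R.submatrix id (e ∘ Sum.inl)).det.natDegree = ∑ i, rowDegNat R i := by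
  obtain ⟨g, hg, hdet⟩ := (hrMatrix R).exists_det_submatrix_ne_zero_of_rank_eq hR
  obtain ⟨e, he⟩ := hg.exists_sumEquiv_apply_inl (β := Fin p) (by simp [hn])
  refine ⟨e, (natDegree_det_submatrix_le_sum_rowDegNat R _).antisymm
    (le_natDegree_of_ne_zero ?_)⟩
  rwa [coeff_det_submatrix_sum_rowDegNat, show e ∘ Sum.inl = g from funext he]

theorem exists_sumEquiv_eval_det_submatrix_ne_zero {K : Type*} [Field K] {r p n : ℕ}
    (hn : r + p = n) {R : Matrix (Fin r) (Fin n) K[X]}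
    (hR : ∀ x : K, (R.map (eval x)).rank = r) (x : K) :
    ∃ e : Fin r ⊕ Fin p ≃ Fin n, (R.submatrix id (e ∘ Sum.inl)).det.eval x ≠ 0 := by
  obtain ⟨g, hg, hdet⟩ := (R.map (eval x)).exists_det_submatrix_ne_zero_of_rank_eq (hR x)
  obtain ⟨e, he⟩ := hg.exists_sumEquiv_apply_inl (β := Fin p) (by simp [hn])
  refine ⟨e, ?_⟩
  rwa [show e ∘ Sum.inl = g from funext he, ← coe_evalRingHom, RingHom.map_det,
    RingHom.mapMatrix_apply, ← submatrix_map]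

theorem mul_transpose_eq_zero_of_rowSpace_le_rightNull {r p n : ℕ}
    {R : Matrix (Fin r) (Fin n) F[X]} {M : Matrix (Fin p) (Fin n) F[X]}
    (h : rowSpace M ≤ rightNull R) : R * Mᵀ = 0 := by
  have hrat : toRat R * (toRat M)ᵀ = 0 := by
    rw [rowSpace, rightNull, LinearMap.range_le_ker_iff, ← mulVecLin_mul] at h
    exact toLin'.injective (by rw [toLin'_apply', h, map_zero])
  have hmap : (R * Mᵀ).map (algebraMap F[X] (RatFunc F)) = 0 := by
    rw [Matrix.map_mul, transpose_map]
    exact hrat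
  exact map_injective (RatFunc.algebraMap_injective F)
    (hmap.trans (Matrix.map_zero _ (map_zero _)).symm)

theorem sum_rowDegNat_eq_of_mul_transpose_eq_zero {K : Type*} [Field K] [IsAlgClosed K]
    {r p n : ℕ} (hn : r + p = n) {R : Matrix (Fin r) (Fin n) K[X]}
    {M : Matrix (Fin p) (Fin n) K[X]}
    (hR : ∀ x : K, (R.map (eval x)).rank = r) (hRred : RowReduced R)
    (hM : ∀ x : K, (M.map (eval x)).rank = p) (hMred : RowReduced M) (hRM : R * Mᵀ = 0) :
    ∑ i, rowDegNat R i = ∑ i, rowDegNat M i := by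
  set ρ : (Fin r ⊕ Fin p ≃ Fin n) → K[X] := fun e => (R.submatrix id (e ∘ Sum.inl)).det
  set μ : (Fin r ⊕ Fin p ≃ Fin n) → K[X] := fun e => (M.submatrix id (e ∘ Sum.inr)).det
  have hρ : ∀ x, ∃ e, (ρ e).eval x ≠ 0 := exists_sumEquiv_eval_det_submatrix_ne_zero hn hR
  have hμ : ∀ x, ∃ e, (μ e).eval x ≠ 0 := fun x => by
    obtain ⟨e, he⟩ := exists_sumEquiv_eval_det_submatrix_ne_zero (p := r) (by omega) hM x
    exact ⟨(Equiv.sumComm _ _).trans e, he⟩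
  obtain ⟨e₀, he₀⟩ := hρ 0
  set E := (fromCols (0 : Matrix (Fin p) (Fin r) K[X]) 1).submatrix id e₀.symm
  have hA : ((fromRows R E).submatrix id e₀).det = ρ e₀ := by
    have : (fromRows R E).submatrix id e₀ =
        fromBlocks (R.submatrix id (e₀ ∘ Sum.inl)) (R.submatrix id (e₀ ∘ Sum.inr)) 0 1 := by
      ext (i | i) (j | j) <;> simp [E]
    rw [this, det_fromBlocks_zero₂₁, det_one, mul_one]
  have hmul : ∀ e, Associated (ρ e₀ * μ e) ((E * Mᵀ).det * ρ e) := fun e => by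
    have hdet := det_submatrix_fromRows_mul_det _ E _ hRM e
    rw [← transpose_submatrix, det_transpose] at hdet
    have hsign := hA ▸ associated_det_submatrix_id_equiv (fromRows R E) e e₀
    exact (hsign.symm.mul_right _).trans (Associated.of_eq (hdet.trans (mul_comm _ _)))
  have hassoc : ∀ e, Associated (μ e) (ρ e) :=
    associated_of_forall_associated_mul hρ hμ (fun h => he₀ (by rw [h, eval_zero])) hmul
  obtain ⟨e₁, he₁⟩ := hRred.exists_sumEquiv_natDegree_det_submatrix_eq hn
  obtain ⟨e₂, he₂⟩ := hMred.exists_sumEquiv_natDegree_det_submatrix_eq (p := r) (by omega)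
  have hdeg : ∀ e, (μ e).natDegree = (ρ e).natDegree := fun e =>
    natDegree_eq_of_degree_eq (degree_eq_degree_of_associated (hassoc e))
  apply le_antisymm
  · rw [← he₁, ← hdeg]
    exact natDegree_det_submatrix_le_sum_rowDegNat M _
  · rw [← he₂]
    exact (hdeg ((Equiv.sumComm _ _).trans e₂)).trans_le
      (natDegree_det_submatrix_le_sum_rowDegNat R _)

theorem orbit_Ka_subset_Aa_general
    {n r a : ℕ}
    (hrn : r < n)
    (R : Matrix (Fin r) (Fin n) ℂ[X])
    (hR : IsMinimalRowBasisC R)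
    (hRind : HasMinIndices (rightNull R)
      (Multiset.replicate (a % (n - r)) (a / (n - r) + 1) +
       Multiset.replicate ((n - r) - a % (n - r)) (a / (n - r)))) :
    (∑ i : Fin r, rowDeg R i) = (a : WithBot ℕ) := by
  obtain ⟨p, M, hM, hspan, hms⟩ := hRind
  have hp : p = n - r := by
    simpa using (congrArg Multiset.card hms).trans
      (Multiset.card_replicate_mod_add_replicate_div (by omega) a)
  have hMdeg : ∑ i, rowDegNat M i = a :=
    (congrArg Multiset.sum hms).trans (Multiset.sum_replicate_mod_add_replicate_div (by omega) a)
  have hRdeg := sum_rowDegNat_eq_of_mul_transpose_eq_zero (by omega) hR.1 hR.2 hM.1 hM.2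
    (mul_transpose_eq_zero_of_rowSpace_le_rightNull hspan.le)
  rw [Finset.sum_congr rfl fun i _ => rowDeg_eq_rowDegNat R (hR.2.exists_ne_zero i),
    ← Nat.cast_sum, hRdeg, hMdeg]

/-- If P = L R is a factorization as in the definition of orb(K_a) (dual minimal bases with
the prescribed nullspace minimal indices and matching degrees summing to d), then the sum
of the row degrees of R equals a; that is, orb(K_a) ⊆ A^{m×n}_{d,r,a}. -/
theorem orbit_Ka_subset_Aa
    {m n r d a : ℕ}
    (hm : 2 ≤ m) (hn : 2 ≤ n) (hd : 1 ≤ d) (hr0 : 0 < r) (hrm : r < m) (hrn : r < n)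
    (ha : a ≤ r * d)
    (P : Matrix (Fin m) (Fin n) ℂ[X])
    (L : Matrix (Fin m) (Fin r) ℂ[X]) (R : Matrix (Fin r) (Fin n) ℂ[X])
    (hfact : P = L * R)
    (hL : IsMinimalColBasisC L) (hR : IsMinimalRowBasisC R)
    (hLind : HasMinIndices (leftNull L)
      (Multiset.replicate ((r * d - a) % (m - r)) ((r * d - a) / (m - r) + 1) +
       Multiset.replicate ((m - r) - (r * d - a) % (m - r)) ((r * d - a) / (m - r))))
    (hRind : HasMinIndices (rightNull R)
      (Multiset.replicate (a % (n - r)) (a / (n - r) + 1) +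
       Multiset.replicate ((n - r) - a % (n - r)) (a / (n - r))))
    (hdeg : ∀ i : Fin r, colDeg L i + rowDeg R i = (d : WithBot ℕ)) :
    (∑ i : Fin r, rowDeg R i) = (a : WithBot ℕ) :=
  orbit_Ka_subset_Aa_general hrn R hR hRind
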